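/- Let V_A and V_B be disjoint finite sets with |V_A| = |V_B| = n, let G_A and G_B be arbitrary simple graphs on V_A and V_B respectively, and let G' be the unweighted graph on V_A ∪ V_B whose edges are those of G_A, those of G_B, and all pairs {a,b} with a ∈ V_A, b ∈ V_B. If at least one of the complement graphs G_A^c (on V_A) and G_B^c (on V_B) is connected, then the Max-Cut SDP for G' has a unique optimal solution, namely the rank-1 matrix X* = x xᵀ where x is +1 on V_A and −1 on V_B. -/

import Mathlib

open Matrix Finset

/-- The Laplacian matrix of a weighted graph given by a weight function `w`. -/
noncomputable def lapW {V : Type*} [Fintype V] [DecidableEq V] (w : V → V → ℝ) :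
    Matrix V V ℝ :=
  Matrix.of fun i j => if i = j then ∑ k, w i k else -w i j

/-- `w` is a valid weight function: symmetric, zero diagonal, nonnegative. -/
def IsWeight {V : Type*} [Fintype V] (w : V → V → ℝ) : Prop :=
  (∀ i j, w i j = w j i) ∧ (∀ i, w i i = 0) ∧ ∀ i j, 0 ≤ w i j

/-- The maximum-cut value `MC(G)`. -/
noncomputable def maxCutVal {V : Type*} [Fintype V] [DecidableEq V] (w : V → V → ℝ) : ℝ :=
  sSup {c | ∃ x : V → ℝ, (∀ i, x i = 1 ∨ x i = -1) ∧
    c = (1 / 4) * (x ⬝ᵥ (lapW w).mulVec x)}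

/-- The Max-Cut SDP value `φ(G)`. -/
noncomputable def sdpVal {V : Type*} [Fintype V] [DecidableEq V] (w : V → V → ℝ) : ℝ :=
  sSup {c | ∃ X : Matrix V V ℝ, X.PosSemidef ∧ (∀ i, X i i = 1) ∧
    c = (1 / 4) * (lapW w * X).trace}

/-- `X` is an optimal solution of the Max-Cut SDP for the weighted graph `w`. -/
def IsOptSol {V : Type*} [Fintype V] [DecidableEq V] (w : V → V → ℝ)
    (X : Matrix V V ℝ) : Prop :=
  X.PosSemidef ∧ (∀ i, X i i = 1) ∧ (1 / 4) * (lapW w * X).trace = sdpVal w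

/-- The Max-Cut SDP relaxation is exact: `φ(G) = MC(G)`. -/
def IsExact {V : Type*} [Fintype V] [DecidableEq V] (w : V → V → ℝ) : Prop :=
  sdpVal w = maxCutVal w

/-- The join graph `G' = G_A ∪ G_B ∪ K(V_A, V_B)`: the unweighted graph on `V_A ⊕ V_B`
whose edges are those of `A`, those of `B`, and all pairs between the two sides. -/
def joinW {m n : ℕ} (A : SimpleGraph (Fin m)) (B : SimpleGraph (Fin n))
    [DecidableRel A.Adj] [DecidableRel B.Adj] :
    (Fin m ⊕ Fin n) → (Fin m ⊕ Fin n) → ℝ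
  | Sum.inl i, Sum.inl j => if A.Adj i j then 1 else 0
  | Sum.inr i, Sum.inr j => if B.Adj i j then 1 else 0
  | _, _ => 1

/-- The vector taking value `+1` on `V_A` and `-1` on `V_B`. -/
def xJoin (m n : ℕ) : (Fin m ⊕ Fin n) → ℝ := Sum.elim (fun _ => 1) fun _ => -1

/-! A feasible `X` (positive semidefinite with unit diagonal) has `|X i j| ≤ 1`, and
`tr (L X) = |V|² - 𝟙ᵀ X 𝟙 - ∑ᵢⱼ (1 - w i j) (1 - X j i)`. For the join every weight is at most `1`,
so both subtracted terms are nonnegative and `φ(G') ≤ |V|² / 4`; the rank-one `x xᵀ` makes both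
vanish. Hence an optimal `X` has zero row sums and `X i j = 1` along every edge of the complement
graphs. An entry `X i j = ±1` forces the columns `i` and `j` to agree up to that sign, so along the
connected complement of `G_A` (say) `X = 1` on `V_A × V_A`. The zero row sums and `|V_A| = |V_B|`
then force `X = -1` on `V_A × V_B`, and comparing columns once more gives `X = 1` on `V_B × V_B`. -/

lemma Matrix.mulVec_single_add_single_apply {V : Type*} [Fintype V] [DecidableEq V]
    (X : Matrix V V ℝ) (i j : V) (s t : ℝ) (k : V) :
    (X *ᵥ (Pi.single i s + Pi.single j t)) k = X k i * s + X k j * t := by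
  simp only [mulVec, dotProduct_add, dotProduct_single]

namespace Matrix.PosSemidef

lemma symm_apply {V : Type*} {X : Matrix V V ℝ} (hX : X.PosSemidef) (i j : V) :
    X j i = X i j := by
  simpa using hX.isHermitian.apply i j

variable {V : Type*} [Fintype V] {X : Matrix V V ℝ}

lemma dotProduct_mulVec_single_add_single [DecidableEq V] (hX : X.PosSemidef)
    (hd : ∀ i, X i i = 1) (i j : V) (t : ℝ) :
    star (Pi.single i 1 + Pi.single j t) ⬝ᵥ X *ᵥ (Pi.single i 1 + Pi.single j t) =
      1 + 2 * t * X i j + t ^ 2 := by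
  simp only [star_trivial, add_dotProduct, single_dotProduct, mulVec_single_add_single_apply, hd,
    hX.symm_apply i j]
  ring

lemma abs_apply_le_one (hX : X.PosSemidef) (hd : ∀ i, X i i = 1) (i j : V) :
    |X i j| ≤ 1 := by
  classical
  have hplus := hX.dotProduct_mulVec_nonneg (Pi.single i 1 + Pi.single j 1)
  have hminus := hX.dotProduct_mulVec_nonneg (Pi.single i 1 + Pi.single j (-1))
  rw [dotProduct_mulVec_single_add_single hX hd] at hplus hminus
  exact abs_le.2 ⟨by linarith, by linarith⟩

lemma apply_eq_mul_of_apply_eq (hX : X.PosSemidef) (hd : ∀ i, X i i = 1) {i j : V} {t : ℝ}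
    (ht : t ^ 2 = 1) (h : X i j = t) (k : V) : X k i = t * X k j := by
  classical
  have hzero : star (Pi.single i 1 + Pi.single j (-t)) ⬝ᵥ X *ᵥ
      (Pi.single i 1 + Pi.single j (-t)) = 0 := by
    rw [dotProduct_mulVec_single_add_single hX hd, h]
    linear_combination -ht
  have hk := congrFun ((hX.dotProduct_mulVec_zero_iff _).1 hzero) k
  rw [mulVec_single_add_single_apply, Pi.zero_apply] at hk
  linarith

lemma apply_eq_one_trans (hX : X.PosSemidef) (hd : ∀ i, X i i = 1) {i j k : V}
    (hij : X i j = 1) (hjk : X j k = 1) : X i k = 1 := by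
  rw [← hij, apply_eq_mul_of_apply_eq hX hd (one_pow 2) hjk i, one_mul]

lemma apply_eq_one_of_reachable {W : Type*} {G : SimpleGraph W} (hX : X.PosSemidef)
    (hd : ∀ i, X i i = 1) (f : W → V) (hadj : ∀ a b, G.Adj a b → X (f a) (f b) = 1)
    {a b : W} (hr : G.Reachable a b) : X (f a) (f b) = 1 := by
  obtain ⟨p⟩ := hr
  induction p with
  | nil => exact hd _
  | cons h _ ih => exact apply_eq_one_trans hX hd (hadj _ _ h) ih

lemma sum_apply_nonneg (hX : X.PosSemidef) : 0 ≤ ∑ i, ∑ j, X i j := by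
  simpa [dotProduct, mulVec, Finset.mul_sum] using hX.dotProduct_mulVec_nonneg 1

lemma sum_apply_eq_zero_of_sum_eq_zero (hX : X.PosSemidef) (h : ∑ i, ∑ j, X i j = 0) (i : V) :
    ∑ j, X i j = 0 := by
  have hzero : star 1 ⬝ᵥ X *ᵥ 1 = 0 := by simpa [dotProduct, mulVec] using h
  simpa [mulVec, dotProduct] using congrFun ((hX.dotProduct_mulVec_zero_iff 1).1 hzero) i

lemma eq_vecMulVec_of_sum_apply_eq_zero (hX : X.PosSemidef) (hd : ∀ i, X i i = 1)
    (hrow : ∀ i, ∑ j, X i j = 0) {x : V → ℝ} (hx : ∀ i, x i = 1 ∨ x i = -1)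
    (hbal : 0 ≤ ∑ i, x i) (hone : ∀ i j, x i = 1 → x j = 1 → X i j = 1) :
    X = vecMulVec x x := by
  have hrow_pos : ∀ i, x i = 1 → ∀ j, X i j = x j := by
    intro i hi
    have hnonneg : ∀ j ∈ univ, 0 ≤ X i j - x j := by
      intro j _
      rcases hx j with hj | hj
      · simp [hone i j hi hj, hj]
      · linarith [(abs_le.1 (abs_apply_le_one hX hd i j)).1]
    have hsum : ∑ j, (X i j - x j) = 0 :=
      le_antisymm (by rw [sum_sub_distrib, hrow]; linarith) (sum_nonneg hnonneg)
    intro j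
    linarith [(sum_eq_zero_iff_of_nonneg hnonneg).1 hsum j (mem_univ j)]
  ext i k
  rw [vecMulVec_apply]
  rcases hx i with hi | hi
  · rw [hrow_pos i hi k, hi, one_mul]
  obtain ⟨i₀, hi₀⟩ : ∃ i₀, x i₀ = 1 := by
    by_contra! hnone
    have hsum : ∑ j, x j = -Fintype.card V := by
      simp [fun j => (hx j).resolve_left (hnone j)]
    have hcard : (0 : ℝ) < Fintype.card V := by exact_mod_cast Fintype.card_pos_iff.2 ⟨i⟩
    linarith
  have hcol := apply_eq_mul_of_apply_eq hX hd (t := -1) (by norm_num)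
    (by rw [hrow_pos i₀ hi₀ i, hi]) k
  rw [symm_apply hX i₀ k, hrow_pos i₀ hi₀ k] at hcol
  rw [symm_apply hX k i, hi]
  linarith

end Matrix.PosSemidef

lemma one_sub_mul_one_sub_nonneg {V : Type*} [Fintype V] {w : V → V → ℝ} {X : Matrix V V ℝ}
    (hw₁ : ∀ i j, w i j ≤ 1) (hX : X.PosSemidef) (hd : ∀ i, X i i = 1) (i j : V) :
    0 ≤ (1 - w i j) * (1 - X j i) :=
  mul_nonneg (by linarith [hw₁ i j]) (by linarith [(abs_le.1 (hX.abs_apply_le_one hd j i)).2])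

section Laplacian

variable {V : Type*} [Fintype V] [DecidableEq V] {w : V → V → ℝ} {X : Matrix V V ℝ}

lemma trace_lapW_mul (hw : ∀ i, w i i = 0) (hd : ∀ i, X i i = 1) :
    (lapW w * X).trace = ∑ i, ∑ j, w i j * (1 - X j i) := by
  refine sum_congr rfl fun i _ => ?_
  have hentry : ∀ j, lapW w i j * X j i = (if i = j then ∑ k, w i k else 0) - w i j * X j i := by
    intro j
    by_cases h : i = j
    · subst h; simp [lapW, hw, hd]
    · simp [lapW, h]
  simp [Matrix.mul_apply, hentry, sum_sub_distrib, mul_sub]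

lemma trace_lapW_mul_eq_card_sq_sub (hw : ∀ i, w i i = 0) (hd : ∀ i, X i i = 1) :
    (lapW w * X).trace = Fintype.card V ^ 2 - ∑ i, ∑ j, X i j
      - ∑ i, ∑ j, (1 - w i j) * (1 - X j i) := by
  rw [trace_lapW_mul hw hd, sum_comm (f := fun i j => X i j)]
  simp only [sub_mul, one_mul, sum_sub_distrib, sum_const, card_univ, nsmul_eq_mul, mul_one]
  ring

lemma trace_lapW_mul_le (hw : ∀ i, w i i = 0) (hw₁ : ∀ i j, w i j ≤ 1)
    (hX : X.PosSemidef) (hd : ∀ i, X i i = 1) :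
    (lapW w * X).trace ≤ Fintype.card V ^ 2 := by
  rw [trace_lapW_mul_eq_card_sq_sub hw hd]
  have := hX.sum_apply_nonneg
  have := sum_nonneg fun i (_ : i ∈ univ) =>
    sum_nonneg fun j (_ : j ∈ univ) => one_sub_mul_one_sub_nonneg hw₁ hX hd i j
  linarith

lemma trace_lapW_mul_eq_card_sq_iff (hw : ∀ i, w i i = 0) (hw₁ : ∀ i j, w i j ≤ 1)
    (hX : X.PosSemidef) (hd : ∀ i, X i i = 1) :
    (lapW w * X).trace = Fintype.card V ^ 2 ↔
      ∑ i, ∑ j, X i j = 0 ∧ ∀ i j, (1 - w i j) * (1 - X j i) = 0 := by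
  have hterm : ∀ p ∈ (univ : Finset (V × V)), 0 ≤ (1 - w p.1 p.2) * (1 - X p.2 p.1) :=
    fun p _ => one_sub_mul_one_sub_nonneg hw₁ hX hd p.1 p.2
  rw [trace_lapW_mul_eq_card_sq_sub hw hd, ← Fintype.sum_prod_type', sub_sub, sub_eq_self,
    add_eq_zero_iff_of_nonneg hX.sum_apply_nonneg (sum_nonneg hterm),
    sum_eq_zero_iff_of_nonneg hterm]
  simp

lemma sdpVal_eq_of_trace_lapW_mul_eq_card_sq (hw : ∀ i, w i i = 0) (hw₁ : ∀ i j, w i j ≤ 1)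
    (hX : X.PosSemidef) (hd : ∀ i, X i i = 1) (h : (lapW w * X).trace = Fintype.card V ^ 2) :
    sdpVal w = Fintype.card V ^ 2 / 4 := by
  refine IsGreatest.csSup_eq ⟨⟨X, hX, hd, by rw [h]; ring⟩, ?_⟩
  rintro _ ⟨Y, hY, hdY, rfl⟩
  linarith [trace_lapW_mul_le hw hw₁ hY hdY]

end Laplacian

section Join

variable {m n : ℕ} (A : SimpleGraph (Fin m)) (B : SimpleGraph (Fin n))
  [DecidableRel A.Adj] [DecidableRel B.Adj]

lemma joinW_self (i : Fin m ⊕ Fin n) : joinW A B i i = 0 := by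
  rcases i with i | i <;> simp [joinW]

lemma joinW_le_one (i j : Fin m ⊕ Fin n) : joinW A B i j ≤ 1 := by
  rcases i with i | i <;> rcases j with j | j <;> simp [joinW, apply_ite (· ≤ (1 : ℝ))]

variable {A B} {X : Matrix (Fin m ⊕ Fin n) (Fin m ⊕ Fin n) ℝ}

lemma apply_inl_inl_eq_one_of_compl_adj (hcomp : ∀ i j, (1 - joinW A B i j) * (1 - X j i) = 0)
    {i j : Fin m} (h : Aᶜ.Adj i j) : X (.inl i) (.inl j) = 1 := by
  have := hcomp (.inl j) (.inl i)
  simp only [joinW, if_neg ((SimpleGraph.compl_adj _ _ _).1 h.symm).2, sub_zero, one_mul] at this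
  linarith

lemma apply_inr_inr_eq_one_of_compl_adj (hcomp : ∀ i j, (1 - joinW A B i j) * (1 - X j i) = 0)
    {i j : Fin n} (h : Bᶜ.Adj i j) : X (.inr i) (.inr j) = 1 := by
  have := hcomp (.inr j) (.inr i)
  simp only [joinW, if_neg ((SimpleGraph.compl_adj _ _ _).1 h.symm).2, sub_zero, one_mul] at this
  linarith

end Join

lemma xJoin_eq_one_or_eq_neg_one {m n : ℕ} (i : Fin m ⊕ Fin n) :
    xJoin m n i = 1 ∨ xJoin m n i = -1 := by
  rcases i with i | i <;> simp [xJoin]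

lemma posSemidef_vecMulVec_xJoin (m n : ℕ) : (vecMulVec (xJoin m n) (xJoin m n)).PosSemidef := by
  simpa using posSemidef_vecMulVec_self_star (xJoin m n)

lemma vecMulVec_xJoin_apply_self {m n : ℕ} (i : Fin m ⊕ Fin n) :
    vecMulVec (xJoin m n) (xJoin m n) i i = 1 := by
  rcases xJoin_eq_one_or_eq_neg_one i with h | h <;> simp [vecMulVec_apply, h]

lemma sum_xJoin (n : ℕ) : ∑ i, xJoin n n i = 0 := by
  simp [xJoin, Fintype.sum_sum_type]

lemma trace_lapW_joinW_mul_vecMulVec_xJoin {n : ℕ} (A B : SimpleGraph (Fin n))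
    [DecidableRel A.Adj] [DecidableRel B.Adj] :
    (lapW (joinW A B) * vecMulVec (xJoin n n) (xJoin n n)).trace
      = Fintype.card (Fin n ⊕ Fin n) ^ 2 := by
  refine (trace_lapW_mul_eq_card_sq_iff (joinW_self A B) (joinW_le_one A B)
    (posSemidef_vecMulVec_xJoin n n) vecMulVec_xJoin_apply_self).2 ⟨?_, ?_⟩
  · simp only [vecMulVec_apply, ← sum_mul_sum, sum_xJoin, mul_zero]
  · rintro (i | i) (j | j) <;> simp [joinW, xJoin, vecMulVec_apply]

/-- **Uniqueness of the optimal SDP solution for balanced joins.**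
If `|V_A| = |V_B| = n` and at least one of the complement graphs `G_Aᶜ`, `G_Bᶜ` is
connected, then the Max-Cut SDP for `G'` has a unique optimal solution, namely the rank-1
matrix `X* = x xᵀ` where `x` is `+1` on `V_A` and `-1` on `V_B`. -/
theorem joinW_unique_optSol_of_compl_connected {n : ℕ} (A B : SimpleGraph (Fin n))
    [DecidableRel A.Adj] [DecidableRel B.Adj]
    (hconn : Aᶜ.Connected ∨ Bᶜ.Connected) :
    IsOptSol (joinW A B) (Matrix.vecMulVec (xJoin n n) (xJoin n n)) ∧
    ∀ X : Matrix (Fin n ⊕ Fin n) (Fin n ⊕ Fin n) ℝ,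
      IsOptSol (joinW A B) X → X = Matrix.vecMulVec (xJoin n n) (xJoin n n) := by
  have hxpsd := posSemidef_vecMulVec_xJoin n n
  have hxd : ∀ i, vecMulVec (xJoin n n) (xJoin n n) i i = 1 := vecMulVec_xJoin_apply_self
  have htrace := trace_lapW_joinW_mul_vecMulVec_xJoin A B
  have hsdp := sdpVal_eq_of_trace_lapW_mul_eq_card_sq (joinW_self A B) (joinW_le_one A B)
    hxpsd hxd htrace
  refine ⟨⟨hxpsd, hxd, by rw [htrace, hsdp]; ring⟩, fun X ⟨hX, hd, hval⟩ => ?_⟩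
  obtain ⟨hsum, hcomp⟩ := (trace_lapW_mul_eq_card_sq_iff (joinW_self A B) (joinW_le_one A B)
    hX hd).1 (by rw [hsdp] at hval; linarith)
  have hrow := hX.sum_apply_eq_zero_of_sum_eq_zero hsum
  rcases hconn with hA | hB
  · refine hX.eq_vecMulVec_of_sum_apply_eq_zero hd hrow xJoin_eq_one_or_eq_neg_one
      (sum_xJoin n).ge ?_
    rintro (i | i) (j | j) <;> norm_num [xJoin]
    exact hX.apply_eq_one_of_reachable hd Sum.inl
      (fun _ _ => apply_inl_inl_eq_one_of_compl_adj hcomp) (hA.preconnected i j)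
  · rw [← neg_neg (xJoin n n), neg_vecMulVec, vecMulVec_neg, neg_neg]
    refine hX.eq_vecMulVec_of_sum_apply_eq_zero hd hrow
      (fun i => by rcases xJoin_eq_one_or_eq_neg_one i with h | h <;> simp [h])
      (by simp only [Pi.neg_apply, sum_neg_distrib, sum_xJoin, neg_zero, le_refl]) ?_
    rintro (i | i) (j | j) <;> norm_num [xJoin]
    exact hX.apply_eq_one_of_reachable hd Sum.inr
      (fun _ _ => apply_inr_inr_eq_one_of_compl_adj hcomp) (hB.preconnected i j)
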